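/- Let s > 3/2 and let ε, μ > 0, ι, κ, α, γ, δ ∈ ℝ, β < 0 with μ|β| < 1. For all u, v ∈ H^s(ℝ), ‖f(u) - f(v)‖_s ≤ c₄ ‖u - v‖_s, where c₄ is a constant depending only on μ, β, the other parameters, ‖u‖_s and ‖v‖_s; that is, f is Lipschitz in the H^s norm on bounded sets of H^s(ℝ). -/

import Mathlib

/-!
We model the Sobolev space `H^r(ℝ)` of real-valued tempered distributions on the Fourier
side: an element `f ∈ H^r(ℝ)` is represented by its Fourier transform `F = 𝓕f : ℝ → ℂ`
(unitary convention `𝓕f(ξ) = (2π)^{-1/2} ∫ e^{-iξx} f(x) dx`), subject to the conditions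
`(1+ξ²)^{r/2} F ∈ L²(ℝ)` and the conjugate symmetry `F(-ξ) = conj (F ξ)` (real-valuedness).
Under this representation:
* the norm `‖f‖_r = ‖(1+ξ²)^{r/2} 𝓕f‖_{L²}` becomes `hsNorm r F`; `hsNorm 0` is the `L²` norm;
* `∂ₓ` becomes multiplication by `iξ` (`fourierDeriv`);
* `Λ^r = (1-∂ₓ²)^{r/2}` becomes multiplication by `(1+ξ²)^{r/2}` (`sobolevWeight r`);
* the pointwise product becomes the normalized convolution `fourierMul`.
-/

noncomputable section

open MeasureTheory Complex

/-- Fourier side of `Λ^r = (1-∂ₓ²)^{r/2}`: multiplication by the weight `(1+ξ²)^{r/2}`. -/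
def sobolevWeight (r : ℝ) (F : ℝ → ℂ) : ℝ → ℂ :=
  fun ξ => (((1 + ξ ^ 2) ^ (r / 2) : ℝ) : ℂ) * F ξ

/-- `F = 𝓕f` represents an element of `H^r(ℝ)`: `(1+ξ²)^{r/2} F ∈ L²`. -/
def MemHSobolev (r : ℝ) (F : ℝ → ℂ) : Prop :=
  MeasureTheory.MemLp (sobolevWeight r F) 2 MeasureTheory.volume

/-- The Sobolev norm `‖f‖_r = ‖(1+ξ²)^{r/2} 𝓕f‖_{L²}`; `hsNorm 0` is the `L²` norm of `f`. -/
def hsNorm (r : ℝ) (F : ℝ → ℂ) : ℝ :=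
  (MeasureTheory.eLpNorm (sobolevWeight r F) 2 MeasureTheory.volume).toReal

/-- `F = 𝓕f` for a real-valued `f` iff `F` is (a.e.) conjugate-symmetric. -/
def RealSymm (F : ℝ → ℂ) : Prop :=
  ∀ᵐ ξ : ℝ, F (-ξ) = starRingEnd ℂ (F ξ)

/-- Fourier side of the derivative `∂ₓ`: multiplication by `iξ`. -/
def fourierDeriv (F : ℝ → ℂ) : ℝ → ℂ :=
  fun ξ => Complex.I * (ξ : ℂ) * F ξ

/-- Fourier side of the pointwise product: the normalized convolution
`(𝓕(fg))(ξ) = (2π)^{-1/2} ∫ 𝓕f(η) 𝓕g(ξ-η) dη`. -/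
def fourierMul (F G : ℝ → ℂ) : ℝ → ℂ :=
  fun ξ => ((Real.sqrt (2 * Real.pi) : ℝ) : ℂ)⁻¹ * ∫ η : ℝ, F η * G (ξ - η)

/-- Fourier side of
`g(u) = (1-α/β)u + ((3ε-2)/4 - 1/(2μβ))u² + (ε²ι/3)u³ + (ε³κ/4)u⁴
        + ((3εμγ - εμδ - μβ)/2)(u_x)²`. -/
def fourierG (ε μ ι κ α β γ δ : ℝ) (U : ℝ → ℂ) : ℝ → ℂ := fun ξ =>
  ((1 - α / β : ℝ) : ℂ) * U ξ
    + (((3 * ε - 2) / 4 - 1 / (2 * μ * β) : ℝ) : ℂ) * fourierMul U U ξ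
    + ((ε ^ 2 * ι / 3 : ℝ) : ℂ) * fourierMul U (fourierMul U U) ξ
    + ((ε ^ 3 * κ / 4 : ℝ) : ℂ) * fourierMul U (fourierMul U (fourierMul U U)) ξ
    + (((3 * ε * μ * γ - ε * μ * δ - μ * β) / 2 : ℝ) : ℂ) *
        fourierMul (fourierDeriv U) (fourierDeriv U) ξ

/-- Fourier side of `f(u) = -(1+μβ∂ₓ²)^{-1}∂ₓ g(u)`: multiplication of `𝓕(g(u))` by the
symbol `-iξ/(1-μβξ²)`. -/
def fourierF (ε μ ι κ α β γ δ : ℝ) (U : ℝ → ℂ) : ℝ → ℂ := fun ξ =>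
  -(Complex.I * (ξ : ℂ) / (1 - ((μ * β : ℝ) : ℂ) * (ξ : ℂ) ^ 2)) * fourierG ε μ ι κ α β γ δ U ξ

/-!
On the Fourier side, `f(u) - f(v)` is `g(u) - g(v)` multiplied by the symbol `-iξ/(1-μβξ²)`.
Since `μβ < 0` this symbol is `O(⟨ξ⟩⁻¹)`, where `⟨ξ⟩ = (1+ξ²)^{1/2}`, so it maps `H^{s-1}` to
`H^s`, and it suffices that `g` be Lipschitz on bounded sets from `H^s` to `H^{s-1}`. Such maps
are closed under sums, scalar multiples and products because `H^t` is an algebra for `t > 1/2`: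
Peetre's inequality `⟨ξ⟩^t ≤ 2^t (⟨η⟩^t + ⟨ξ-η⟩^t)` and Young's inequality give
`‖uv‖_t ≲ ‖û‖_{L¹} ‖v‖_t + ‖u‖_t ‖v̂‖_{L¹}`, and `‖û‖_{L¹} ≲ ‖u‖_t` by Cauchy–Schwarz against
`⟨ξ⟩^{-t} ∈ L²`. With `t = s - 1 > 1/2`, every term of `g`, including `(u_x)²`, is such a product.
-/

namespace Sobolev

open scoped ENNReal

section Weight

lemma one_add_sq_rpow_pos (r ξ : ℝ) : 0 < (1 + ξ ^ 2) ^ (r / 2) := by positivity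

lemma one_add_sq_rpow_neg_mul_self (r ξ : ℝ) :
    (1 + ξ ^ 2) ^ (-r / 2) * (1 + ξ ^ 2) ^ (r / 2) = 1 := by
  rw [← Real.rpow_add (by positivity), neg_div, neg_add_cancel, Real.rpow_zero]

lemma one_add_sq_rpow_mono {r s : ℝ} (hrs : r ≤ s) (ξ : ℝ) :
    (1 + ξ ^ 2) ^ (r / 2) ≤ (1 + ξ ^ 2) ^ (s / 2) :=
  Real.rpow_le_rpow_of_exponent_le (by nlinarith [sq_nonneg ξ]) (by linarith)

lemma one_add_sq_rpow_add_one (s ξ : ℝ) :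
    (1 + ξ ^ 2) ^ ((s + 1) / 2) = (1 + ξ ^ 2) ^ ((s - 1) / 2) * (1 + ξ ^ 2) := by
  rw [← Real.rpow_add_one (by positivity)]; ring_nf

lemma abs_mul_one_add_sq_rpow_le (s ξ : ℝ) :
    |ξ| * (1 + ξ ^ 2) ^ ((s - 1) / 2) ≤ (1 + ξ ^ 2) ^ (s / 2) := by
  have hsqrt : |ξ| ≤ (1 + ξ ^ 2) ^ ((1 : ℝ) / 2) := by
    rw [← Real.sqrt_eq_rpow, ← Real.sqrt_sq_eq_abs]
    exact Real.sqrt_le_sqrt (by linarith)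
  calc |ξ| * (1 + ξ ^ 2) ^ ((s - 1) / 2)
      ≤ (1 + ξ ^ 2) ^ ((1 : ℝ) / 2) * (1 + ξ ^ 2) ^ ((s - 1) / 2) := by gcongr
    _ = (1 + ξ ^ 2) ^ (s / 2) := by rw [← Real.rpow_add (by positivity)]; ring_nf

/-- Peetre's inequality. -/
lemma one_add_sq_rpow_le_add {t : ℝ} (ht : 0 ≤ t) (ξ η : ℝ) :
    (1 + ξ ^ 2) ^ (t / 2)
      ≤ 2 ^ t * ((1 + η ^ 2) ^ (t / 2) + (1 + (ξ - η) ^ 2) ^ (t / 2)) := by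
  set m := max (1 + η ^ 2) (1 + (ξ - η) ^ 2)
  have hm : 1 + ξ ^ 2 ≤ 4 * m := by
    have := le_max_left (1 + η ^ 2) (1 + (ξ - η) ^ 2)
    have := le_max_right (1 + η ^ 2) (1 + (ξ - η) ^ 2)
    nlinarith [sq_nonneg (η - (ξ - η))]
  have hm_rpow : m ^ (t / 2) ≤ (1 + η ^ 2) ^ (t / 2) + (1 + (ξ - η) ^ 2) ^ (t / 2) := by
    rcases max_cases (1 + η ^ 2) (1 + (ξ - η) ^ 2) with ⟨h, -⟩ | ⟨h, -⟩ <;>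
      rw [show m = _ from h] <;> linarith [one_add_sq_rpow_pos t η, one_add_sq_rpow_pos t (ξ - η)]
  calc (1 + ξ ^ 2) ^ (t / 2) ≤ (4 * m) ^ (t / 2) := by gcongr
    _ = 2 ^ t * m ^ (t / 2) := by
        rw [Real.mul_rpow (by norm_num) (by positivity), show (4 : ℝ) = 2 ^ (2 : ℝ) by norm_num,
          ← Real.rpow_mul (by norm_num)]
        ring_nf
    _ ≤ _ := by gcongr

lemma one_add_sq_rpow_mul_div_le {a : ℝ} (ha : 0 < a) (s ξ : ℝ) :
    (1 + ξ ^ 2) ^ (s / 2) * (|ξ| / (1 + a * ξ ^ 2))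
      ≤ (1 + 1 / a) * (1 + ξ ^ 2) ^ ((s - 1) / 2) := by
  have hd : 0 < 1 + a * ξ ^ 2 := by positivity
  have hsymb : 1 + ξ ^ 2 ≤ (1 + 1 / a) * (1 + a * ξ ^ 2) := by
    field_simp; nlinarith [sq_nonneg (ξ * a)]
  have h := abs_mul_one_add_sq_rpow_le (s + 1) ξ
  rw [add_sub_cancel_right, one_add_sq_rpow_add_one] at h
  rw [mul_div_assoc', div_le_iff₀ hd]
  calc (1 + ξ ^ 2) ^ (s / 2) * |ξ| ≤ (1 + ξ ^ 2) ^ ((s - 1) / 2) * (1 + ξ ^ 2) := by linarith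
    _ ≤ (1 + ξ ^ 2) ^ ((s - 1) / 2) * ((1 + 1 / a) * (1 + a * ξ ^ 2)) := by gcongr
    _ = _ := by ring

lemma continuous_one_add_sq_rpow (r : ℝ) : Continuous fun ξ : ℝ => (1 + ξ ^ 2) ^ (r / 2) :=
  (continuous_const.add (continuous_pow 2)).rpow_const fun ξ =>
    Or.inl (by positivity : (0 : ℝ) < 1 + ξ ^ 2).ne'

end Weight

section ENorm

def sobolevENorm (r : ℝ) (F : ℝ → ℂ) : ℝ≥0∞ := eLpNorm (sobolevWeight r F) 2 volume

lemma hsNorm_eq_toReal (r : ℝ) (F : ℝ → ℂ) : hsNorm r F = (sobolevENorm r F).toReal := rfl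

lemma norm_sobolevWeight (r : ℝ) (F : ℝ → ℂ) (ξ : ℝ) :
    ‖sobolevWeight r F ξ‖ = (1 + ξ ^ 2) ^ (r / 2) * ‖F ξ‖ := by
  rw [sobolevWeight, norm_mul, Complex.norm_real, Real.norm_of_nonneg (by positivity)]

lemma enorm_sobolevWeight (r : ℝ) (F : ℝ → ℂ) (ξ : ℝ) :
    ‖sobolevWeight r F ξ‖ₑ = ENNReal.ofReal ((1 + ξ ^ 2) ^ (r / 2)) * ‖F ξ‖ₑ := by
  rw [← ofReal_norm, norm_sobolevWeight, ENNReal.ofReal_mul (by positivity), ofReal_norm]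

lemma aestronglyMeasurable_sobolevWeight_iff {r : ℝ} {F : ℝ → ℂ} :
    AEStronglyMeasurable (sobolevWeight r F) volume ↔ AEStronglyMeasurable F volume := by
  have hw : ∀ q : ℝ, AEStronglyMeasurable (fun ξ : ℝ => (((1 + ξ ^ 2) ^ (q / 2) : ℝ) : ℂ)) volume :=
    fun q => (Complex.continuous_ofReal.comp (continuous_one_add_sq_rpow q)).aestronglyMeasurable
  refine ⟨fun h => ?_, fun h => (hw r).mul h⟩
  refine ((hw (-r)).mul h).congr (.of_forall fun ξ => ?_)
  simp only [Pi.mul_apply, sobolevWeight, ← mul_assoc, ← Complex.ofReal_mul,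
    one_add_sq_rpow_neg_mul_self, Complex.ofReal_one, one_mul]

lemma sobolevENorm_le_of_norm_le {r r' M : ℝ} {F G : ℝ → ℂ} (hM : 0 ≤ M)
    (h : ∀ ξ, ‖sobolevWeight r F ξ‖ ≤ M * ‖sobolevWeight r' G ξ‖) :
    sobolevENorm r F ≤ ENNReal.ofReal M * sobolevENorm r' G := by
  calc sobolevENorm r F ≤ eLpNorm ((M : ℂ) • sobolevWeight r' G) 2 volume :=
        eLpNorm_mono fun ξ => by simpa [norm_mul, Complex.norm_real, abs_of_nonneg hM] using h ξ
    _ = ENNReal.ofReal M * sobolevENorm r' G := by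
        rw [eLpNorm_const_smul, ← ofReal_norm, Complex.norm_real, Real.norm_of_nonneg hM]; rfl

lemma sobolevENorm_mono {r s : ℝ} (hrs : r ≤ s) (F : ℝ → ℂ) :
    sobolevENorm r F ≤ sobolevENorm s F := by
  simpa using sobolevENorm_le_of_norm_le zero_le_one (r := r) (r' := s) (F := F) (G := F)
    fun ξ => by
      rw [norm_sobolevWeight, norm_sobolevWeight, one_mul]
      exact mul_le_mul_of_nonneg_right (one_add_sq_rpow_mono hrs ξ) (norm_nonneg _)

lemma sobolevENorm_fourierDeriv_le (s : ℝ) (F : ℝ → ℂ) :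
    sobolevENorm (s - 1) (fourierDeriv F) ≤ sobolevENorm s F := by
  simpa using sobolevENorm_le_of_norm_le zero_le_one (r := s - 1) (r' := s)
    (F := fourierDeriv F) (G := F) fun ξ => by
      rw [norm_sobolevWeight, norm_sobolevWeight, one_mul, fourierDeriv, norm_mul, norm_mul,
        Complex.norm_I, one_mul, Complex.norm_real, Real.norm_eq_abs, ← mul_assoc, mul_comm _ |ξ|]
      exact mul_le_mul_of_nonneg_right (abs_mul_one_add_sq_rpow_le s ξ) (norm_nonneg _)

lemma sobolevENorm_add_le {r : ℝ} {F G : ℝ → ℂ} (hF : AEStronglyMeasurable F volume)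
    (hG : AEStronglyMeasurable G volume) :
    sobolevENorm r (fun ξ => F ξ + G ξ) ≤ sobolevENorm r F + sobolevENorm r G := by
  have h : sobolevWeight r (fun ξ => F ξ + G ξ) = sobolevWeight r F + sobolevWeight r G := by
    funext ξ; simp only [sobolevWeight, Pi.add_apply]; ring
  rw [sobolevENorm, h]
  exact eLpNorm_add_le (aestronglyMeasurable_sobolevWeight_iff.2 hF)
    (aestronglyMeasurable_sobolevWeight_iff.2 hG) one_le_two

lemma sobolevENorm_const_mul (r : ℝ) (c : ℂ) (F : ℝ → ℂ) :
    sobolevENorm r (fun ξ => c * F ξ) = ‖c‖ₑ * sobolevENorm r F := by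
  have h : sobolevWeight r (fun ξ => c * F ξ) = c • sobolevWeight r F := by
    funext ξ; simp only [sobolevWeight, Pi.smul_apply, smul_eq_mul]; ring
  rw [sobolevENorm, h, eLpNorm_const_smul]; rfl

lemma memLp_two_of_sobolevENorm_ne_top {r : ℝ} (hr : 0 ≤ r) {F : ℝ → ℂ}
    (hF : AEStronglyMeasurable F volume) (hfin : sobolevENorm r F ≠ ∞) : MemLp F 2 volume := by
  refine ⟨hF, lt_of_le_of_lt (eLpNorm_mono fun ξ => ?_) hfin.lt_top⟩
  rw [norm_sobolevWeight]
  have h1 : (1 : ℝ) ≤ (1 + ξ ^ 2) ^ (r / 2) := by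
    simpa using one_add_sq_rpow_mono hr ξ
  nlinarith [norm_nonneg (F ξ)]

lemma _root_.MemHSobolev.aestronglyMeasurable {r : ℝ} {F : ℝ → ℂ} (hF : MemHSobolev r F) :
    AEStronglyMeasurable F volume :=
  aestronglyMeasurable_sobolevWeight_iff.1 hF.1

lemma _root_.MemHSobolev.sub {r : ℝ} {F G : ℝ → ℂ} (hF : MemHSobolev r F) (hG : MemHSobolev r G) :
    MemHSobolev r fun ξ => F ξ - G ξ := by
  have h : sobolevWeight r (fun ξ => F ξ - G ξ) = sobolevWeight r F - sobolevWeight r G := by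
    funext ξ; simp only [sobolevWeight, Pi.sub_apply]; ring
  rw [MemHSobolev, h]
  exact MemLp.sub hF hG

lemma sobolevENorm_le_ofReal {r C : ℝ} {F : ℝ → ℂ} (hF : MemHSobolev r F) (h : hsNorm r F ≤ C) :
    sobolevENorm r F ≤ ENNReal.ofReal C :=
  (ENNReal.ofReal_toReal hF.2.ne).symm.trans_le (ENNReal.ofReal_le_ofReal h)

end ENorm

section Young

lemma eLpNorm_two_sq {α E : Type*} [MeasurableSpace α] [ENorm E] (μ : Measure α) (f : α → E) :
    eLpNorm f 2 μ ^ 2 = ∫⁻ x, ‖f x‖ₑ ^ 2 ∂μ := by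
  simpa [ENNReal.rpow_two] using
    eLpNorm_nnreal_pow_eq_lintegral (f := f) (μ := μ) (p := 2) two_ne_zero

lemma lintegral_mul_sq_le {α : Type*} [MeasurableSpace α] {μ : Measure α} {φ ψ : α → ℝ≥0∞}
    (hφ : AEMeasurable φ μ) (hψ : AEMeasurable ψ μ) :
    (∫⁻ x, φ x * ψ x ∂μ) ^ 2 ≤ (∫⁻ x, φ x ∂μ) * ∫⁻ x, φ x * ψ x ^ 2 ∂μ := by
  have h := ENNReal.lintegral_mul_le_Lp_mul_Lq μ Real.HolderConjugate.two_two
    (hφ.pow_const ((1 : ℝ) / 2)) ((hφ.pow_const ((1 : ℝ) / 2)).mul hψ)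
  have hsqrt : ∀ x, φ x ^ ((1 : ℝ) / 2) * φ x ^ ((1 : ℝ) / 2) = φ x := fun x => by
    rw [← ENNReal.rpow_add_of_nonneg _ _ (by norm_num) (by norm_num)]; norm_num
  have hsq : ∀ x, (φ x ^ ((1 : ℝ) / 2)) ^ 2 = φ x := fun x => by rw [sq, hsqrt]
  simp only [Pi.mul_apply, ← mul_assoc, hsqrt, ENNReal.mul_rpow_of_nonneg _ _ zero_le_two,
    ENNReal.rpow_two, hsq] at h
  calc (∫⁻ x, φ x * ψ x ∂μ) ^ 2
      ≤ ((∫⁻ x, φ x ∂μ) ^ ((1 : ℝ) / 2) * (∫⁻ x, φ x * ψ x ^ 2 ∂μ) ^ ((1 : ℝ) / 2)) ^ 2 := by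
        gcongr
    _ = _ := by
        rw [mul_pow, ← ENNReal.rpow_natCast, ← ENNReal.rpow_natCast, ← ENNReal.rpow_mul,
          ← ENNReal.rpow_mul]
        norm_num

lemma lintegral_mul_comp_sub_comm (φ ψ : ℝ → ℝ≥0∞) (ξ : ℝ) :
    ∫⁻ η, φ η * ψ (ξ - η) = ∫⁻ η, ψ η * φ (ξ - η) := by
  rw [← lintegral_sub_left_eq_self (fun η => ψ η * φ (ξ - η)) ξ]
  simp only [sub_sub_cancel, mul_comm]

/-- Young's convolution inequality `‖φ ⋆ ψ‖₂ ≤ ‖φ‖₁ ‖ψ‖₂`. -/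
lemma eLpNorm_lintegral_mul_comp_sub_le {φ ψ : ℝ → ℝ≥0∞} (hφ : AEMeasurable φ volume)
    (hψ : AEMeasurable ψ volume) :
    eLpNorm (fun ξ => ∫⁻ η, φ η * ψ (ξ - η)) 2 volume ≤ (∫⁻ η, φ η) * eLpNorm ψ 2 volume := by
  have hker : AEMeasurable (fun z : ℝ × ℝ => φ z.2 * ψ (z.1 - z.2) ^ 2) (volume.prod volume) :=
    (hφ.comp_quasiMeasurePreserving Measure.quasiMeasurePreserving_snd).mul
      ((hψ.comp_quasiMeasurePreserving (quasiMeasurePreserving_sub volume volume)).pow_const 2)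
  rw [← ENNReal.pow_le_pow_left_iff two_ne_zero, mul_pow, eLpNorm_two_sq, eLpNorm_two_sq]
  simp only [enorm_eq_self]
  calc ∫⁻ ξ, (∫⁻ η, φ η * ψ (ξ - η)) ^ 2
      ≤ ∫⁻ ξ, (∫⁻ η, φ η) * ∫⁻ η, φ η * ψ (ξ - η) ^ 2 := lintegral_mono fun ξ =>
        lintegral_mul_sq_le hφ (hψ.comp_quasiMeasurePreserving
          (Measure.measurePreserving_sub_left volume ξ).quasiMeasurePreserving)
    _ = (∫⁻ η, φ η) * ∫⁻ η, φ η * ∫⁻ ξ, ψ (ξ - η) ^ 2 := by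
        rw [lintegral_const_mul'' _ hker.lintegral_prod_right', lintegral_lintegral_swap hker]
        refine congrArg _ (lintegral_congr fun η => ?_)
        exact lintegral_const_mul'' (φ η) (f := fun ξ => ψ (ξ - η) ^ 2) <|
          (hψ.comp_quasiMeasurePreserving
            (measurePreserving_sub_right volume η).quasiMeasurePreserving).pow_const 2
    _ = (∫⁻ η, φ η) ^ 2 * ∫⁻ ζ, ψ ζ ^ 2 := by
        have hshift : ∀ η, ∫⁻ ξ, ψ (ξ - η) ^ 2 = ∫⁻ ζ, ψ ζ ^ 2 := fun η =>
          lintegral_sub_right_eq_self (fun ζ => ψ ζ ^ 2) η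
        simp only [hshift]
        rw [lintegral_mul_const'' _ hφ, sq, mul_assoc]

lemma aemeasurable_lintegral_mul_comp_sub {φ ψ : ℝ → ℝ≥0∞} (hφ : AEMeasurable φ volume)
    (hψ : AEMeasurable ψ volume) : AEMeasurable (fun ξ => ∫⁻ η, φ η * ψ (ξ - η)) volume :=
  ((hφ.comp_quasiMeasurePreserving Measure.quasiMeasurePreserving_snd).mul
    (hψ.comp_quasiMeasurePreserving
      (quasiMeasurePreserving_sub volume volume))).lintegral_prod_right'

end Young

section Algebra

lemma lintegral_enorm_le_mul_sobolevENorm (t : ℝ) {F : ℝ → ℂ}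
    (hF : AEStronglyMeasurable F volume) :
    ∫⁻ ξ, ‖F ξ‖ₑ ≤ eLpNorm (fun ξ : ℝ => (1 + ξ ^ 2) ^ (-t / 2)) 2 volume * sobolevENorm t F := by
  have h := eLpNorm_smul_le_mul_eLpNorm (p := 2) (q := 2) (r := 1)
    (aestronglyMeasurable_sobolevWeight_iff (r := t).2 hF)
    (continuous_one_add_sq_rpow (-t)).aestronglyMeasurable
  have hF_eq : (fun ξ : ℝ => (1 + ξ ^ 2) ^ (-t / 2)) • sobolevWeight t F = F := by
    funext ξ
    simp only [Pi.smul_apply', sobolevWeight, Complex.real_smul, ← mul_assoc,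
      ← Complex.ofReal_mul, one_add_sq_rpow_neg_mul_self, Complex.ofReal_one, one_mul]
  rwa [hF_eq, eLpNorm_one_eq_lintegral_enorm] at h

lemma eLpNorm_one_add_sq_rpow_neg_lt_top {t : ℝ} (ht : 1 / 2 < t) :
    eLpNorm (fun ξ : ℝ => (1 + ξ ^ 2) ^ (-t / 2)) 2 volume < ∞ := by
  have hi := integrable_rpow_neg_one_add_norm_sq (E := ℝ) (μ := volume) (r := 2 * t)
    (by simp only [Module.finrank_self, Nat.cast_one]; linarith)
  refine ((memLp_two_iff_integrable_sq
    (continuous_one_add_sq_rpow (-t)).aestronglyMeasurable).2 (hi.congr (.of_forall fun ξ => ?_)))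
    |>.eLpNorm_lt_top
  dsimp only
  rw [Real.norm_eq_abs, sq_abs, ← Real.rpow_mul_natCast (by positivity)]
  ring_nf

lemma enorm_fourierMul_le (F G : ℝ → ℂ) (ξ : ℝ) :
    ‖fourierMul F G ξ‖ₑ ≤
      ENNReal.ofReal (√(2 * Real.pi))⁻¹ * ∫⁻ η, ‖F η‖ₑ * ‖G (ξ - η)‖ₑ := by
  rw [fourierMul, enorm_mul, ← Complex.ofReal_inv, ← ofReal_norm, Complex.norm_real,
    Real.norm_of_nonneg (by positivity)]
  gcongr
  exact (enorm_integral_le_lintegral_enorm _).trans_eq (by simp only [enorm_mul])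

lemma enorm_sobolevWeight_fourierMul_le {t : ℝ} (ht : 0 ≤ t) {F G : ℝ → ℂ}
    (hF : AEStronglyMeasurable F volume) (hG : AEStronglyMeasurable G volume) (ξ : ℝ) :
    ‖sobolevWeight t (fourierMul F G) ξ‖ₑ ≤ ENNReal.ofReal ((√(2 * Real.pi))⁻¹ * 2 ^ t) *
      ((∫⁻ η, ‖G η‖ₑ * ‖sobolevWeight t F (ξ - η)‖ₑ)
        + ∫⁻ η, ‖F η‖ₑ * ‖sobolevWeight t G (ξ - η)‖ₑ) := by
  set w : ℝ → ℝ≥0∞ := fun ξ => ENNReal.ofReal ((1 + ξ ^ 2) ^ (t / 2))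
  have hpeetre : ∀ η, w ξ ≤ ENNReal.ofReal (2 ^ t) * (w η + w (ξ - η)) := fun η => by
    simp only [w]
    rw [← ENNReal.ofReal_add (by positivity) (by positivity), ← ENNReal.ofReal_mul (by positivity)]
    exact ENNReal.ofReal_le_ofReal (one_add_sq_rpow_le_add ht ξ η)
  have hmeas : AEMeasurable (fun η => ‖sobolevWeight t F η‖ₑ * ‖G (ξ - η)‖ₑ) volume :=
    (aestronglyMeasurable_sobolevWeight_iff.2 hF).enorm.mul (hG.enorm.comp_quasiMeasurePreserving
      (Measure.measurePreserving_sub_left volume ξ).quasiMeasurePreserving)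
  rw [enorm_sobolevWeight]
  calc w ξ * ‖fourierMul F G ξ‖ₑ
      ≤ w ξ * (ENNReal.ofReal (√(2 * Real.pi))⁻¹ * ∫⁻ η, ‖F η‖ₑ * ‖G (ξ - η)‖ₑ) := by
        gcongr; exact enorm_fourierMul_le F G ξ
    _ = ENNReal.ofReal (√(2 * Real.pi))⁻¹ * ∫⁻ η, w ξ * (‖F η‖ₑ * ‖G (ξ - η)‖ₑ) := by
        rw [lintegral_const_mul' _ _ ENNReal.ofReal_ne_top]; ring
    _ ≤ ENNReal.ofReal (√(2 * Real.pi))⁻¹ * ∫⁻ η, ENNReal.ofReal (2 ^ t) *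
          (‖sobolevWeight t F η‖ₑ * ‖G (ξ - η)‖ₑ + ‖F η‖ₑ * ‖sobolevWeight t G (ξ - η)‖ₑ) := by
        refine mul_le_mul_right (lintegral_mono fun η => ?_) _
        calc w ξ * (‖F η‖ₑ * ‖G (ξ - η)‖ₑ)
            ≤ ENNReal.ofReal (2 ^ t) * (w η + w (ξ - η)) * (‖F η‖ₑ * ‖G (ξ - η)‖ₑ) := by
              gcongr; exact hpeetre η
          _ = _ := by simp only [enorm_sobolevWeight, w]; ring
    _ = _ := by
        rw [lintegral_const_mul' _ _ ENNReal.ofReal_ne_top, lintegral_add_left' hmeas,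
          lintegral_mul_comp_sub_comm (fun η => ‖sobolevWeight t F η‖ₑ) (fun η => ‖G η‖ₑ),
          ENNReal.ofReal_mul (by positivity)]
        ring

/-- `2^t` comes from Peetre's inequality and `‖⟨ξ⟩^{-t}‖_{L²}` from the `L¹` bound. -/
def algebraConst (t : ℝ) : ℝ≥0∞ :=
  2 * ENNReal.ofReal ((√(2 * Real.pi))⁻¹ * 2 ^ t) *
    eLpNorm (fun ξ : ℝ => (1 + ξ ^ 2) ^ (-t / 2)) 2 volume

lemma algebraConst_ne_top {t : ℝ} (ht : 1 / 2 < t) : algebraConst t ≠ ∞ := by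
  unfold algebraConst
  finiteness [eLpNorm_one_add_sq_rpow_neg_lt_top ht]

lemma sobolevENorm_fourierMul_le {t : ℝ} (ht : 0 ≤ t) {F G : ℝ → ℂ}
    (hF : AEStronglyMeasurable F volume) (hG : AEStronglyMeasurable G volume) :
    sobolevENorm t (fourierMul F G) ≤ algebraConst t * sobolevENorm t F * sobolevENorm t G := by
  set k := ENNReal.ofReal ((√(2 * Real.pi))⁻¹ * 2 ^ t)
  set A := eLpNorm (fun ξ : ℝ => (1 + ξ ^ 2) ^ (-t / 2)) 2 volume
  have hwF := (aestronglyMeasurable_sobolevWeight_iff (r := t).2 hF).enorm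
  have hwG := (aestronglyMeasurable_sobolevWeight_iff (r := t).2 hG).enorm
  have h1 := aemeasurable_lintegral_mul_comp_sub hG.enorm hwF
  have h2 := aemeasurable_lintegral_mul_comp_sub hF.enorm hwG
  calc sobolevENorm t (fourierMul F G)
      ≤ k * eLpNorm (fun ξ => (∫⁻ η, ‖G η‖ₑ * ‖sobolevWeight t F (ξ - η)‖ₑ)
          + ∫⁻ η, ‖F η‖ₑ * ‖sobolevWeight t G (ξ - η)‖ₑ) 2 volume :=
        eLpNorm_le_mul_eLpNorm_of_ae_le_mul'' 2 (h1.add h2).aestronglyMeasurable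
          (.of_forall fun ξ => by
            simpa only [enorm_eq_self] using enorm_sobolevWeight_fourierMul_le ht hF hG ξ)
    _ ≤ k * (eLpNorm (fun ξ => ∫⁻ η, ‖G η‖ₑ * ‖sobolevWeight t F (ξ - η)‖ₑ) 2 volume
          + eLpNorm (fun ξ => ∫⁻ η, ‖F η‖ₑ * ‖sobolevWeight t G (ξ - η)‖ₑ) 2 volume) := by
        gcongr
        exact eLpNorm_add_le h1.aestronglyMeasurable h2.aestronglyMeasurable one_le_two
    _ ≤ k * ((∫⁻ η, ‖G η‖ₑ) * sobolevENorm t F + (∫⁻ η, ‖F η‖ₑ) * sobolevENorm t G) := by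
        gcongr
        · simpa only [eLpNorm_enorm, sobolevENorm] using
            eLpNorm_lintegral_mul_comp_sub_le hG.enorm hwF
        · simpa only [eLpNorm_enorm, sobolevENorm] using
            eLpNorm_lintegral_mul_comp_sub_le hF.enorm hwG
    _ ≤ k * (A * sobolevENorm t G * sobolevENorm t F
          + A * sobolevENorm t F * sobolevENorm t G) := by
        gcongr
        · exact lintegral_enorm_le_mul_sobolevENorm t hG
        · exact lintegral_enorm_le_mul_sobolevENorm t hF
    _ = algebraConst t * sobolevENorm t F * sobolevENorm t G := by
        simp only [algebraConst, k, A]; ring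

end Algebra

section Product

lemma _root_.MeasureTheory.AEStronglyMeasurable.fourierMul {F G : ℝ → ℂ}
    (hF : AEStronglyMeasurable F volume) (hG : AEStronglyMeasurable G volume) :
    AEStronglyMeasurable (fourierMul F G) volume :=
  aestronglyMeasurable_const.mul <|
    ((hF.comp_quasiMeasurePreserving Measure.quasiMeasurePreserving_snd).mul
      (hG.comp_quasiMeasurePreserving
        (quasiMeasurePreserving_sub volume volume))).integral_prod_right'

lemma integrable_mul_comp_sub {F G : ℝ → ℂ} (hF : MemLp F 2 volume) (hG : MemLp G 2 volume)
    (ξ : ℝ) : Integrable (fun η => F η * G (ξ - η)) volume :=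
  memLp_one_iff_integrable.1 <|
    (hG.comp_measurePreserving (Measure.measurePreserving_sub_left volume ξ)).mul (r := 1) hF

lemma fourierMul_sub_fourierMul {F₁ F₂ G₁ G₂ : ℝ → ℂ} (hF₁ : MemLp F₁ 2 volume)
    (hF₂ : MemLp F₂ 2 volume) (hG₁ : MemLp G₁ 2 volume) (hG₂ : MemLp G₂ 2 volume) (ξ : ℝ) :
    fourierMul F₁ G₁ ξ - fourierMul F₂ G₂ ξ
      = fourierMul (fun η => F₁ η - F₂ η) G₁ ξ + fourierMul F₂ (fun η => G₁ η - G₂ η) ξ := by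
  have hsplit := integral_add (integrable_mul_comp_sub (hF₁.sub hF₂) hG₁ ξ)
    (integrable_mul_comp_sub hF₂ (hG₁.sub hG₂) ξ)
  simp only [Pi.sub_apply] at hsplit
  simp only [fourierMul]
  rw [← mul_sub, ← mul_add, ← integral_sub (integrable_mul_comp_sub hF₁ hG₁ ξ)
    (integrable_mul_comp_sub hF₂ hG₂ ξ), ← hsplit]
  congr 2
  funext η
  ring

lemma sobolevENorm_fourierMul_sub_le {t : ℝ} (ht : 0 ≤ t) {F₁ F₂ G₁ G₂ : ℝ → ℂ}
    (hF₁ : MemLp F₁ 2 volume) (hF₂ : MemLp F₂ 2 volume) (hG₁ : MemLp G₁ 2 volume)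
    (hG₂ : MemLp G₂ 2 volume) :
    sobolevENorm t (fun ξ => fourierMul F₁ G₁ ξ - fourierMul F₂ G₂ ξ)
      ≤ algebraConst t * sobolevENorm t (fun ξ => F₁ ξ - F₂ ξ) * sobolevENorm t G₁
        + algebraConst t * sobolevENorm t F₂ * sobolevENorm t (fun ξ => G₁ ξ - G₂ ξ) := by
  have hF := hF₁.1.sub hF₂.1
  have hG := hG₁.1.sub hG₂.1
  simp_rw [fourierMul_sub_fourierMul hF₁ hF₂ hG₁ hG₂]
  exact (sobolevENorm_add_le (hF.fourierMul hG₁.1) (hF₂.1.fourierMul hG)).trans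
    (add_le_add (sobolevENorm_fourierMul_le ht hF hG₁.1) (sobolevENorm_fourierMul_le ht hF₂.1 hG))

end Product

def LipschitzOnBounded (s t : ℝ) (Φ : (ℝ → ℂ) → ℝ → ℂ) : Prop :=
  ∀ C : ℝ≥0∞, C ≠ ∞ → ∃ K : ℝ≥0∞, K ≠ ∞ ∧ ∀ U V : ℝ → ℂ, MemHSobolev s U → MemHSobolev s V →
    sobolevENorm s U ≤ C → sobolevENorm s V ≤ C →
      AEStronglyMeasurable (Φ U) volume ∧ sobolevENorm t (Φ U) ≤ K ∧
        sobolevENorm t (fun ξ => Φ U ξ - Φ V ξ) ≤ K * sobolevENorm s (fun ξ => U ξ - V ξ)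

lemma lipschitzOnBounded_id {s t : ℝ} (hts : t ≤ s) : LipschitzOnBounded s t fun U => U := by
  intro C hC
  refine ⟨C + 1, by finiteness, fun U V hU _ hUC _ =>
    ⟨hU.aestronglyMeasurable, ?_, ?_⟩⟩
  · exact (sobolevENorm_mono hts U).trans (hUC.trans le_self_add)
  · calc sobolevENorm t (fun ξ => U ξ - V ξ) ≤ 1 * sobolevENorm s (fun ξ => U ξ - V ξ) := by
          rw [one_mul]; exact sobolevENorm_mono hts _
      _ ≤ (C + 1) * sobolevENorm s (fun ξ => U ξ - V ξ) := by gcongr; exact le_add_self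

namespace LipschitzOnBounded

variable {s t : ℝ} {Φ Ψ : (ℝ → ℂ) → ℝ → ℂ}

lemma fourierDeriv (hΦ : LipschitzOnBounded s t Φ) :
    LipschitzOnBounded s (t - 1) fun U => fourierDeriv (Φ U) := by
  intro C hC
  obtain ⟨K, hK, hΦK⟩ := hΦ C hC
  refine ⟨K, hK, fun U V hU hV hUC hVC => ?_⟩
  obtain ⟨hmeas, hbound, hlip⟩ := hΦK U V hU hV hUC hVC
  have hsub : (fun ξ => _root_.fourierDeriv (Φ U) ξ - _root_.fourierDeriv (Φ V) ξ)
      = _root_.fourierDeriv (fun ξ => Φ U ξ - Φ V ξ) := by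
    funext ξ; simp only [_root_.fourierDeriv]; ring
  refine ⟨(continuous_const.mul Complex.continuous_ofReal).aestronglyMeasurable.mul hmeas,
    (sobolevENorm_fourierDeriv_le t _).trans hbound, ?_⟩
  rw [hsub]
  exact (sobolevENorm_fourierDeriv_le t _).trans hlip

lemma const_mul (hΦ : LipschitzOnBounded s t Φ) (c : ℂ) :
    LipschitzOnBounded s t fun U ξ => c * Φ U ξ := by
  intro C hC
  obtain ⟨K, hK, hΦK⟩ := hΦ C hC
  refine ⟨‖c‖ₑ * K, by finiteness, fun U V hU hV hUC hVC => ?_⟩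
  obtain ⟨hmeas, hbound, hlip⟩ := hΦK U V hU hV hUC hVC
  refine ⟨aestronglyMeasurable_const.mul hmeas, ?_, ?_⟩
  · rw [sobolevENorm_const_mul]; gcongr
  · simp_rw [← mul_sub]
    rw [sobolevENorm_const_mul, mul_assoc]; gcongr

lemma add (hΦ : LipschitzOnBounded s t Φ) (hΨ : LipschitzOnBounded s t Ψ) :
    LipschitzOnBounded s t fun U ξ => Φ U ξ + Ψ U ξ := by
  intro C hC
  obtain ⟨K₁, hK₁, hΦK⟩ := hΦ C hC
  obtain ⟨K₂, hK₂, hΨK⟩ := hΨ C hC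
  refine ⟨K₁ + K₂, by finiteness, fun U V hU hV hUC hVC => ?_⟩
  obtain ⟨hΦU, hΦUb, hΦlip⟩ := hΦK U V hU hV hUC hVC
  obtain ⟨hΨU, hΨUb, hΨlip⟩ := hΨK U V hU hV hUC hVC
  obtain ⟨hΦV, -, -⟩ := hΦK V U hV hU hVC hUC
  obtain ⟨hΨV, -, -⟩ := hΨK V U hV hU hVC hUC
  have hsub : (fun ξ => (Φ U ξ + Ψ U ξ) - (Φ V ξ + Ψ V ξ))
      = fun ξ => (Φ U ξ - Φ V ξ) + (Ψ U ξ - Ψ V ξ) := by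
    funext ξ; ring
  refine ⟨hΦU.add hΨU, (sobolevENorm_add_le hΦU hΨU).trans (add_le_add hΦUb hΨUb), ?_⟩
  rw [hsub, add_mul]
  exact (sobolevENorm_add_le (hΦU.sub hΦV) (hΨU.sub hΨV)).trans (add_le_add hΦlip hΨlip)

lemma fourierMul (ht : 1 / 2 < t) (hΦ : LipschitzOnBounded s t Φ)
    (hΨ : LipschitzOnBounded s t Ψ) :
    LipschitzOnBounded s t fun U => _root_.fourierMul (Φ U) (Ψ U) := by
  have ht0 : 0 ≤ t := by linarith
  intro C hC
  obtain ⟨K₁, hK₁, hΦK⟩ := hΦ C hC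
  obtain ⟨K₂, hK₂, hΨK⟩ := hΨ C hC
  refine ⟨2 * algebraConst t * K₁ * K₂, by finiteness [algebraConst_ne_top ht],
    fun U V hU hV hUC hVC => ?_⟩
  obtain ⟨hΦU, hΦUb, hΦlip⟩ := hΦK U V hU hV hUC hVC
  obtain ⟨hΨU, hΨUb, hΨlip⟩ := hΨK U V hU hV hUC hVC
  obtain ⟨hΦV, hΦVb, -⟩ := hΦK V U hV hU hVC hUC
  obtain ⟨hΨV, hΨVb, -⟩ := hΨK V U hV hU hVC hUC
  have hL2 : ∀ {F : ℝ → ℂ} {K : ℝ≥0∞}, K ≠ ∞ → AEStronglyMeasurable F volume →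
      sobolevENorm t F ≤ K → MemLp F 2 volume := fun hK hF hb =>
    memLp_two_of_sobolevENorm_ne_top ht0 hF (ne_top_of_le_ne_top hK hb)
  refine ⟨hΦU.fourierMul hΨU, ?_, ?_⟩
  · calc sobolevENorm t (_root_.fourierMul (Φ U) (Ψ U))
        ≤ algebraConst t * K₁ * K₂ := by
          refine (sobolevENorm_fourierMul_le ht0 hΦU hΨU).trans ?_; gcongr
      _ ≤ 2 * (algebraConst t * K₁ * K₂) := le_mul_of_one_le_left' one_le_two
      _ = 2 * algebraConst t * K₁ * K₂ := by ring
  · calc _ ≤ algebraConst t * (K₁ * sobolevENorm s (fun ξ => U ξ - V ξ)) * K₂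
          + algebraConst t * K₁ * (K₂ * sobolevENorm s (fun ξ => U ξ - V ξ)) :=
          (sobolevENorm_fourierMul_sub_le ht0 (hL2 hK₁ hΦU hΦUb) (hL2 hK₁ hΦV hΦVb)
            (hL2 hK₂ hΨU hΨUb) (hL2 hK₂ hΨV hΨVb)).trans (by gcongr)
      _ = 2 * algebraConst t * K₁ * K₂ * sobolevENorm s (fun ξ => U ξ - V ξ) := by ring

end LipschitzOnBounded

lemma lipschitzOnBounded_fourierG (ε μ ι κ α β γ δ : ℝ) {s : ℝ} (hs : 3 / 2 < s) :
    LipschitzOnBounded s (s - 1) (fourierG ε μ ι κ α β γ δ) := by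
  have ht : 1 / 2 < s - 1 := by linarith
  have hU := lipschitzOnBounded_id (s := s) (t := s - 1) (by linarith)
  have hUx := (lipschitzOnBounded_id (s := s) le_rfl).fourierDeriv
  exact ((((hU.const_mul _).add ((hU.fourierMul ht hU).const_mul _)).add
    ((hU.fourierMul ht (hU.fourierMul ht hU)).const_mul _)).add
    ((hU.fourierMul ht (hU.fourierMul ht (hU.fourierMul ht hU))).const_mul _)).add
    ((hUx.fourierMul ht hUx).const_mul _)

lemma sobolevENorm_symbol_mul_le {b : ℝ} (hb : b < 0) (s : ℝ) (G : ℝ → ℂ) :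
    sobolevENorm s (fun ξ => -(Complex.I * ξ / (1 - (b : ℂ) * (ξ : ℂ) ^ 2)) * G ξ)
      ≤ ENNReal.ofReal (1 + 1 / -b) * sobolevENorm (s - 1) G := by
  have ha : 0 < -b := neg_pos.2 hb
  refine sobolevENorm_le_of_norm_le (add_nonneg zero_le_one (one_div_pos.2 ha).le) fun ξ => ?_
  have hden : (1 - (b : ℂ) * (ξ : ℂ) ^ 2) = ((1 + -b * ξ ^ 2 : ℝ) : ℂ) := by push_cast; ring
  have hpos : 0 < 1 + -b * ξ ^ 2 := by nlinarith [sq_nonneg ξ]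
  rw [norm_sobolevWeight, norm_sobolevWeight, norm_mul, norm_neg, hden, norm_div, norm_mul,
    Complex.norm_I, one_mul, Complex.norm_real, Complex.norm_real, Real.norm_eq_abs,
    Real.norm_of_nonneg hpos.le, ← mul_assoc, ← mul_assoc]
  exact mul_le_mul_of_nonneg_right (one_add_sq_rpow_mul_div_le ha s ξ) (norm_nonneg _)

end Sobolev

open Sobolev in
theorem f_lipschitz_Hs_general (s ε μ ι κ α β γ δ : ℝ) (hs : 3 / 2 < s) (hμ : 0 < μ)
    (hβ : β < 0) (C : ℝ) :
    ∃ c₄ : ℝ, 0 < c₄ ∧ ∀ U V : ℝ → ℂ,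
      MemHSobolev s U → RealSymm U → hsNorm s U ≤ C →
        MemHSobolev s V → RealSymm V → hsNorm s V ≤ C →
          hsNorm s (fun ξ => fourierF ε μ ι κ α β γ δ U ξ - fourierF ε μ ι κ α β γ δ V ξ)
            ≤ c₄ * hsNorm s (fun ξ => U ξ - V ξ) := by
  have hμβ : μ * β < 0 := mul_neg_of_pos_of_neg hμ hβ
  obtain ⟨K, hK, hG⟩ :=
    lipschitzOnBounded_fourierG ε μ ι κ α β γ δ hs (ENNReal.ofReal C) ENNReal.ofReal_ne_top
  set M := ENNReal.ofReal (1 + 1 / -(μ * β))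
  refine ⟨(M * K).toReal + 1, by positivity, fun U V hU _ hUC hV _ hVC => ?_⟩
  obtain ⟨-, -, hGlip⟩ :=
    hG U V hU hV (sobolevENorm_le_ofReal hU hUC) (sobolevENorm_le_ofReal hV hVC)
  have hF : sobolevENorm s (fun ξ => fourierF ε μ ι κ α β γ δ U ξ - fourierF ε μ ι κ α β γ δ V ξ)
      ≤ M * K * sobolevENorm s (fun ξ => U ξ - V ξ) := by
    simp_rw [fourierF, ← mul_sub, mul_assoc M]
    exact (sobolevENorm_symbol_mul_le hμβ s _).trans (by gcongr)
  calc hsNorm s (fun ξ => fourierF ε μ ι κ α β γ δ U ξ - fourierF ε μ ι κ α β γ δ V ξ)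
      ≤ (M * K).toReal * hsNorm s (fun ξ => U ξ - V ξ) := by
        rw [hsNorm_eq_toReal, hsNorm_eq_toReal, ← ENNReal.toReal_mul]
        exact ENNReal.toReal_mono (by finiteness [(hU.sub hV).2]) hF
    _ ≤ ((M * K).toReal + 1) * hsNorm s (fun ξ => U ξ - V ξ) := by
        gcongr
        · exact ENNReal.toReal_nonneg
        · linarith

/-- For `s > 3/2` and parameters `ε, μ > 0`, `β < 0`, `μ|β| < 1`, the map `f` is Lipschitz
in the `H^s` norm on bounded sets of `H^s(ℝ)`: `‖f(u) - f(v)‖_s ≤ c₄ ‖u - v‖_s` with `c₄`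
depending only on `μ, β`, the other parameters, and (a bound `C` for) `‖u‖_s, ‖v‖_s`. -/
theorem f_lipschitz_Hs (s ε μ ι κ α β γ δ : ℝ) (hs : 3 / 2 < s) (hε : 0 < ε) (hμ : 0 < μ)
    (hβ : β < 0) (hμβ : μ * |β| < 1) (C : ℝ) :
    ∃ c₄ : ℝ, 0 < c₄ ∧ ∀ U V : ℝ → ℂ,
      MemHSobolev s U → RealSymm U → hsNorm s U ≤ C →
        MemHSobolev s V → RealSymm V → hsNorm s V ≤ C →
          hsNorm s (fun ξ => fourierF ε μ ι κ α β γ δ U ξ - fourierF ε μ ι κ α β γ δ V ξ)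
            ≤ c₄ * hsNorm s (fun ξ => U ξ - V ξ) :=
  f_lipschitz_Hs_general s ε μ ι κ α β γ δ hs hμ hβ C

end
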